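/- For every countable group H, the set E_H = {G ∈ 𝒢 : there is an injective group homomorphism H → Ḡ} is an analytic subset of 𝒢 (a continuous image of a Borel subset of a Polish space); consequently E_H is either meager or comeager in 𝒢. -/

import Mathlib

/-!
`E_H` is the projection to `𝒢` of the closed set of pairs `(G, φ)` with `φ : H → ℕ` an injective
homomorphism `H → Ḡ`, hence analytic. Analytic sets have the Baire property: for a continuous
`g : ℕ^ℕ → X`, take Baire-measurable hulls (inside the closure) of the images of the basic
cylinders. Outside a meagre set, a point of the hull of `range g` lies in the hulls along a whole
branch `f`, hence in the closures of the images of cylinders shrinking to `f`, so it is `g f`.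

The permutations of `ℕ` fixing `0` act on `𝒢` by relabelling, and `E_H` is invariant. The action
is topologically transitive: finite pieces of two tables `G` and `G'` are realised by two
relabellings of one table of `Ḡ × Ḡ'`. A Baire-measurable invariant set of a topologically
transitive action on a Baire space is meagre or comeagre.
-/

/-- The set of group multiplication tables on `ℕ` with identity `0`. -/
def GroupTables : Set (ℕ × ℕ → ℕ) :=
  {m | (∀ a b c : ℕ, m (m (a, b), c) = m (a, m (b, c))) ∧
       (∀ a : ℕ, m (a, 0) = a) ∧
       (∀ a : ℕ, m (0, a) = a) ∧
       (∀ a : ℕ, ∃ b : ℕ, m (a, b) = 0 ∧ m (b, a) = 0)}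

/-- The carrier of the group `Ḡ` associated to a table `G ∈ 𝒢` (a copy of `ℕ`). -/
def Carrier (_G : ↥GroupTables) : Type := ℕ

noncomputable instance instGroupCarrier (G : ↥GroupTables) : Group (Carrier G) where
  mul a b := G.1 (a, b)
  one := (0 : ℕ)
  inv a := Classical.choose (G.2.2.2.2 a)
  mul_assoc a b c := G.2.1 a b c
  one_mul a := G.2.2.2.1 a
  mul_one a := G.2.2.1 a
  inv_mul_cancel a := (Classical.choose_spec (G.2.2.2.2 a)).2

/-- Inclusion of `ℕ` into the carrier of `Ḡ`. -/
def toC (G : ↥GroupTables) (n : ℕ) : Carrier G := n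

/-- Projection of the carrier of `Ḡ` back to `ℕ`. -/
def fromC (G : ↥GroupTables) (x : Carrier G) : ℕ := x

open MeasureTheory Topology Set Filter Function PiNat MulAction Equiv

namespace PiNat

theorem exists_forall_res {α : Type*} {P : List α → Prop} (h₀ : P [])
    (h : ∀ s, P s → ∃ a, P (a :: s)) : ∃ f : ℕ → α, ∀ n, P (res f n) := by
  choose c hc using h
  let path : ℕ → {s // P s} := fun n =>
    Nat.rec ⟨[], h₀⟩ (fun _ s => ⟨c s.1 s.2 :: s.1, hc s.1 s.2⟩) n
  refine ⟨fun n => c (path n).1 (path n).2, fun n => ?_⟩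
  suffices res _ n = (path n).1 from this ▸ (path n).2
  induction n with
  | zero => rfl
  | succ n ih => rw [res_succ, ih]

theorem eq_of_forall_mem_closure_image_cylinder {E : ℕ → Type*} [∀ n, TopologicalSpace (E n)]
    [∀ n, DiscreteTopology (E n)] {X : Type*} [TopologicalSpace X] [T2Space X]
    {g : (∀ n, E n) → X} {f : ∀ n, E n} (hg : ContinuousAt g f) {x : X}
    (h : ∀ n, x ∈ closure (g '' cylinder f n)) : x = g f := by
  by_contra hne
  obtain ⟨O, W, hO, hW, hxO, hgW, hOW⟩ := t2_separation hne
  obtain ⟨_, ⟨y, n, rfl⟩, hfy, hyW⟩ :=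
    (isTopologicalBasis_cylinders E).mem_nhds_iff.1 (hg (hW.mem_nhds hgW))
  rw [← mem_cylinder_iff_eq.1 hfy] at hyW
  exact (hOW.closure_right hO).notMem_of_mem_left hxO
    (closure_mono (image_subset_iff.2 hyW) (h n))

end PiNat

section Baire

variable {X : Type*} [TopologicalSpace X]

theorem isMeagre_diff_of_eventuallyLE {s t : Set X} (h : s ≤ᶠ[residual X] t) :
    IsMeagre (s \ t) :=
  mem_of_superset h fun _ hst hd => hd.2 (hst hd.1)

theorem IsMeagre.of_eventuallyLE {s t : Set X} (ht : IsMeagre t) (h : s ≤ᶠ[residual X] t) :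
    IsMeagre s := by
  filter_upwards [ht, h] with x hxt hst hxs using hxt (hst hxs)

theorem exists_baireMeasurableSet_hull [SecondCountableTopology X] (E : Set X) :
    ∃ B : Set X, BaireMeasurableSet B ∧ E ⊆ B ∧ B ⊆ closure E ∧
      ∀ B' : Set X, BaireMeasurableSet B' → E ⊆ B' → IsMeagre (B \ B') := by
  obtain ⟨b, hbc, -, hb⟩ := TopologicalSpace.exists_countable_basis X
  -- `E` is meagre in `V`, and every Baire-measurable `B' ⊇ E` is comeagre in `Vᶜ`
  set C := {U ∈ b | IsMeagre (U ∩ E)}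
  set V := ⋃₀ C
  have hV : IsOpen V := isOpen_sUnion fun U hU => hb.isOpen hU.1
  have mem_V : ∀ {U x}, U ∈ b → x ∈ U → IsMeagre (U ∩ E) → x ∈ V :=
    fun hU hx hUE => ⟨_, ⟨hU, hUE⟩, hx⟩
  have hEV : IsMeagre (E ∩ V) := by
    refine (isMeagre_biUnion (f := (· ∩ E)) (hbc.mono (sep_subset b _)) fun U hU => hU.2).mono ?_
    rintro x ⟨hxE, U, hU, hxU⟩
    exact mem_biUnion hU ⟨hxU, hxE⟩
  refine ⟨Vᶜ ∪ (E ∩ V), hV.baireMeasurableSet.compl.union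
    hEV.baireMeasurableSet, fun x hx => ?_, union_subset ?_ ?_, fun B' hB' hEB' => ?_⟩
  · by_cases h : x ∈ V
    exacts [Or.inr ⟨hx, h⟩, Or.inl h]
  · intro x hx
    by_contra hcl
    obtain ⟨U, hUb, hxU, hU⟩ := hb.exists_subset_of_mem_open hcl isClosed_closure.isOpen_compl
    refine hx (mem_V hUb hxU ?_)
    rw [(disjoint_compl_left.mono hU subset_closure).inter_eq]
    exact .empty
  · exact inter_subset_left.trans subset_closure
  · obtain ⟨W, hW, hDW⟩ := (hV.baireMeasurableSet.compl.diff hB').residualEq_isOpen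
    have hWD : Disjoint W (Vᶜ \ B') := by
      refine disjoint_left.2 fun x hxW hxD => ?_
      obtain ⟨U, hUb, hxU, hUW⟩ := hb.exists_subset_of_mem_open hxW hW
      refine hxD.1 (mem_V hUb hxU ((isMeagre_diff_of_eventuallyLE hDW.symm.le).mono ?_))
      exact fun y hy => ⟨hUW hy.1, fun hyD => hyD.2 (hEB' hy.2)⟩
    have hD : IsMeagre (Vᶜ \ B') := by
      refine (isMeagre_diff_of_eventuallyLE hDW.le).mono fun x hx => ?_
      exact ⟨hx, fun hxW => hWD.notMem_of_mem_left hxW hx⟩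
    refine (hD.union hEV).mono ?_
    rintro x ⟨hx | hx, hxB'⟩
    exacts [Or.inl ⟨hx, hxB'⟩, Or.inr hx]

theorem MeasureTheory.AnalyticSet.baireMeasurableSet [T2Space X] [SecondCountableTopology X]
    {S : Set X} (hS : AnalyticSet S) : BaireMeasurableSet S := by
  rw [AnalyticSet] at hS
  rcases hS with rfl | ⟨g, hg, rfl⟩
  · exact IsMeagre.empty.baireMeasurableSet
  choose hull hull_bms subset_hull hull_subset_closure hull_min using
    exists_baireMeasurableSet_hull (X := X)
  -- the Souslin scheme of `range g`, indexed by reversed finite sequences, and its hulls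
  let A : List ℕ → Set X := fun s => g '' {f | res f s.length = s}
  let B : List ℕ → Set X := fun s => hull (A s)
  have hA : ∀ s, A s ⊆ ⋃ m, A (m :: s) := by
    rintro s _ ⟨f, hf, rfl⟩
    exact mem_iUnion.2 ⟨f s.length, f, congrArg (f s.length :: ·) hf, rfl⟩
  let M := ⋃ s, B s \ ⋃ m, B (m :: s)
  have hM : IsMeagre M := isMeagre_iUnion fun s => hull_min _ _
    (.iUnion fun m => hull_bms _) ((hA s).trans (iUnion_mono fun m => subset_hull _))
  have hAnil : A [] = range g := by simp [A, image_univ]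
  have hBM : B [] \ M ⊆ range g := by
    rintro x ⟨hx, hxM⟩
    obtain ⟨f, hf⟩ : ∃ f : ℕ → ℕ, ∀ n, x ∈ B (res f n) := by
      refine exists_forall_res (P := fun s => x ∈ B s) hx fun s hs => ?_
      by_contra! h
      exact hxM (mem_iUnion.2 ⟨s, hs, by simpa using h⟩)
    refine ⟨f, (eq_of_forall_mem_closure_image_cylinder hg.continuousAt fun n => ?_).symm⟩
    rw [cylinder_eq_res]
    simpa [A] using hull_subset_closure _ (hf n)
  refine (hull_bms (A [])).congr (eventuallyEq_set.2 ?_)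
  filter_upwards [hM] with x hx
  exact ⟨fun h => hBM ⟨h, hx⟩, fun h => subset_hull _ (hAnil ▸ h)⟩

end Baire

open scoped Pointwise in
theorem BaireMeasurableSet.isMeagre_or_mem_residual_of_smul_subset {X M : Type*}
    [TopologicalSpace X] [BaireSpace X] [Group M] [MulAction M X] [ContinuousConstSMul M X]
    [IsTopologicallyTransitive M X] {S : Set X} (hS : BaireMeasurableSet S)
    (hinv : ∀ m : M, m • S ⊆ S) : IsMeagre S ∨ S ∈ residual X := by
  by_contra! h
  obtain ⟨U, hU, hSU⟩ := hS.residualEq_isOpen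
  obtain ⟨V, hV, hSV⟩ := hS.compl.residualEq_isOpen
  have hUne : U.Nonempty :=
    nonempty_of_not_isMeagre fun hUm => h.1 (hUm.of_eventuallyLE hSU.le)
  have hVne : V.Nonempty := nonempty_of_not_isMeagre fun hVm =>
    h.2 (by simpa [IsMeagre] using hVm.of_eventuallyLE hSV.le)
  obtain ⟨m, hm⟩ := IsTopologicallyTransitive.exists_smul_inter (M := M) hU hUne hV hVne
  -- `m • U ∩ V` is a nonempty open set on which both `S` and its complement are comeagre
  refine not_isMeagre_of_isOpen ((hU.smul m).inter hV) hm ?_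
  have hmUS : IsMeagre (m • (U \ S)) := by
    rw [← preimage_smul_inv]
    exact (isMeagre_diff_of_eventuallyLE hSU.symm.le).preimage_of_isOpenMap
      (continuous_const_smul _) (isOpenMap_smul _)
  refine (hmUS.union (isMeagre_diff_of_eventuallyLE hSV.symm.le)).mono ?_
  rintro _ ⟨⟨x, hxU, rfl⟩, hV⟩
  by_cases hxS : m • x ∈ S
  · exact Or.inr ⟨hV, not_not.2 hxS⟩
  · exact Or.inl ⟨x, ⟨hxU, fun h => hxS (hinv m ⟨x, h, rfl⟩)⟩, rfl⟩

theorem Continuous.apply_of_discreteTopology {X ι β : Type*} [TopologicalSpace X]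
    [TopologicalSpace ι] [DiscreteTopology ι] [TopologicalSpace β] {F : X → ι → β} {a : X → ι}
    (hF : Continuous F) (ha : Continuous a) : Continuous fun x => F x (a x) :=
  (continuous_prod_of_discrete_right (f := fun q : (ι → β) × ι => q.1 q.2).2
    fun i => continuous_apply i).comp (hF.prodMk ha)

theorem exists_finset_forall_eq_mem_of_isOpen {ι β : Type*} [TopologicalSpace β]
    [DiscreteTopology β] {U : Set (ι → β)} (hU : IsOpen U) {f : ι → β} (hf : f ∈ U) :
    ∃ I : Finset ι, ∀ g : ι → β, (∀ i ∈ I, g i = f i) → g ∈ U := by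
  obtain ⟨I, u, hu, hIU⟩ := isOpen_pi_iff.1 hU f hf
  exact ⟨I, fun g hg => hIU fun i hi => hg i hi ▸ (hu i hi).2⟩

theorem exists_equiv_eqOn_of_finite {α β : Type*} [Infinite α] (h : Nonempty (α ≃ β))
    {s : Set α} (hs : s.Finite) {f : α → β} (hf : InjOn f s) : ∃ e : α ≃ β, EqOn e f s := by
  have hlt := (Cardinal.lt_aleph0_iff_set_finite.2 hs).trans_le (Cardinal.aleph0_le_mk α)
  obtain ⟨e, he⟩ := Cardinal.extend_function_of_lt ⟨_, hf.injective⟩ hlt h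
  exact ⟨e, fun x hx => he ⟨x, hx⟩⟩

namespace GroupTables

instance (G : ↥GroupTables) : Countable (Carrier G) := inferInstanceAs (Countable ℕ)

instance (G : ↥GroupTables) : Infinite (Carrier G) := inferInstanceAs (Infinite ℕ)

theorem inv_eq_iff_apply_eq_zero (G : ↥GroupTables) (a b : ℕ) :
    fromC G (toC G a)⁻¹ = b ↔ G.1 (a, b) = 0 :=
  inv_eq_iff_mul_eq_one (a := toC G a) (b := toC G b)

noncomputable def withInv (G : ↥GroupTables) : (ℕ × ℕ → ℕ) × (ℕ → ℕ) :=
  (G.1, fun a => fromC G (toC G a)⁻¹)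

theorem continuous_withInv : Continuous withInv := by
  refine continuous_subtype_val.prodMk
    (continuous_pi fun a => continuous_discrete_rng.2 fun b => ?_)
  have : (fun G : ↥GroupTables => fromC G (toC G a)⁻¹) ⁻¹' {b} = {G | G.1 (a, b) = 0} :=
    ext fun G => inv_eq_iff_apply_eq_zero G a b
  rw [this]
  exact (isOpen_discrete {0}).preimage ((continuous_apply (a, b)).comp continuous_subtype_val)

theorem range_withInv : range withInv =
    {q | (∀ a b c, q.1 (q.1 (a, b), c) = q.1 (a, q.1 (b, c))) ∧ (∀ a, q.1 (a, 0) = a) ∧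
      (∀ a, q.1 (0, a) = a) ∧ ∀ a, q.1 (a, q.2 a) = 0 ∧ q.1 (q.2 a, a) = 0} := by
  ext q
  constructor
  · rintro ⟨G, rfl⟩
    exact ⟨G.2.1, G.2.2.1, G.2.2.2.1,
      fun a => ⟨mul_inv_cancel (toC G a), inv_mul_cancel (toC G a)⟩⟩
  · obtain ⟨m, i⟩ := q
    rintro ⟨h1, h2, h3, h4⟩
    have hm : m ∈ GroupTables := ⟨h1, h2, h3, fun a => ⟨i a, h4 a⟩⟩
    exact ⟨⟨m, hm⟩, Prod.ext rfl <| funext fun a =>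
      (inv_eq_iff_apply_eq_zero ⟨m, hm⟩ a (i a)).2 (h4 a).1⟩

theorem isClosed_range_withInv : IsClosed (range withInv) := by
  have hval : ∀ p : ℕ × ℕ, Continuous fun q : (ℕ × ℕ → ℕ) × (ℕ → ℕ) => q.1 p :=
    fun p => (continuous_apply p).comp continuous_fst
  have hinv : ∀ a : ℕ, Continuous fun q : (ℕ × ℕ → ℕ) × (ℕ → ℕ) => q.2 a :=
    fun a => (continuous_apply a).comp continuous_snd
  have hmul : ∀ {l r : (ℕ × ℕ → ℕ) × (ℕ → ℕ) → ℕ}, Continuous l → Continuous r →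
      Continuous fun q : (ℕ × ℕ → ℕ) × (ℕ → ℕ) => q.1 (l q, r q) :=
    fun hl hr => continuous_fst.apply_of_discreteTopology (hl.prodMk hr)
  rw [range_withInv]
  simp only [ofPred_and, ofPred_forall]
  refine .inter ?_ (.inter ?_ (.inter ?_ ?_)) <;>
    refine isClosed_iInter fun a => ?_
  · exact isClosed_iInter fun b => isClosed_iInter fun c => isClosed_eq
      (hmul (hval _) continuous_const) (hmul continuous_const (hval _))
  · exact isClosed_eq (hval _) continuous_const
  · exact isClosed_eq (hval _) continuous_const
  · exact (isClosed_eq (hmul continuous_const (hinv a)) continuous_const).inter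
      (isClosed_eq (hmul (hinv a) continuous_const) continuous_const)

instance : PolishSpace ↥GroupTables :=
  (IsClosedEmbedding.mk (.of_comp continuous_withInv continuous_fst .subtypeVal)
    isClosed_range_withInv).polishSpace

section ofEquiv

variable {M : Type*} [Group M]

def ofEquiv (e : ℕ ≃ M) (he : e 0 = 1) : ↥GroupTables :=
  ⟨fun p => e.symm (e p.1 * e p.2), fun a b c => by simp [mul_assoc], fun a => by simp [he],
    fun a => by simp [he], fun a => ⟨e.symm (e a)⁻¹, by simp [← he], by simp [← he]⟩⟩

@[simp]
theorem ofEquiv_apply (e : ℕ ≃ M) (he : e 0 = 1) (p : ℕ × ℕ) :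
    (ofEquiv e he).1 p = e.symm (e p.1 * e p.2) := rfl

def ofEquivMulEquiv (e : ℕ ≃ M) (he : e 0 = 1) : Carrier (ofEquiv e he) ≃* M where
  __ := e
  map_mul' a b := e.apply_symm_apply (e a * e b)

theorem exists_ofEquiv_eqOn [Countable M] [Infinite M] (G : ↥GroupTables) {φ : Carrier G →* M}
    (hφ : Injective φ) (I : Finset (ℕ × ℕ)) :
    ∃ (e : ℕ ≃ M) (he : e 0 = 1), ∀ p ∈ I, (ofEquiv e he).1 p = G.1 p := by
  classical
  let N : Finset ℕ := insert 0 (I.biUnion fun p => {p.1, p.2, G.1 p})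
  obtain ⟨e, he⟩ := exists_equiv_eqOn_of_finite inferInstance N.finite_toSet
    (f := fun n => φ (toC G n)) hφ.injOn
  refine ⟨e, (he (Finset.mem_insert_self 0 _)).trans (map_one φ), fun p hp => ?_⟩
  have hN : ∀ {n}, n ∈ ({p.1, p.2, G.1 p} : Finset ℕ) → e n = φ (toC G n) :=
    fun hn => he (Finset.mem_insert_of_mem (Finset.mem_biUnion.2 ⟨p, hp, hn⟩))
  rw [ofEquiv_apply, hN (by simp), hN (by simp), ← map_mul]
  change e.symm (φ (toC G (G.1 p))) = G.1 p
  rw [← hN (by simp), e.symm_apply_apply]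

end ofEquiv

noncomputable instance : MulAction (stabilizer (Perm ℕ) (0 : ℕ)) ↥GroupTables where
  smul σ G := ofEquiv (M := Carrier G) (σ : Perm ℕ).symm
    ((Perm.eq_inv_iff_eq (f := (σ : Perm ℕ))).2 σ.2).symm
  one_smul _ := rfl
  mul_smul _ _ _ := rfl

theorem smul_apply (σ : stabilizer (Perm ℕ) (0 : ℕ)) (G : ↥GroupTables) (p : ℕ × ℕ) :
    (σ • G).1 p = (σ : Perm ℕ) (G.1 ((σ : Perm ℕ)⁻¹ p.1, (σ : Perm ℕ)⁻¹ p.2)) := rfl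

instance : ContinuousConstSMul (stabilizer (Perm ℕ) (0 : ℕ)) ↥GroupTables where
  continuous_const_smul σ := by
    refine continuous_induced_rng.2 (continuous_pi fun p => ?_)
    simp only [comp_def, smul_apply]
    exact continuous_of_discreteTopology.comp ((continuous_apply _).comp continuous_subtype_val)

theorem exists_finset_forall_eq_mem_of_isOpen {U : Set ↥GroupTables} (hU : IsOpen U)
    {G : ↥GroupTables} (hG : G ∈ U) :
    ∃ I : Finset (ℕ × ℕ), ∀ K : ↥GroupTables, (∀ p ∈ I, K.1 p = G.1 p) → K ∈ U := by
  obtain ⟨U', hU', rfl⟩ := isOpen_induced_iff.1 hU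
  obtain ⟨I, hI⟩ := _root_.exists_finset_forall_eq_mem_of_isOpen hU' hG
  exact ⟨I, fun K hK => hI K.1 hK⟩

instance : IsTopologicallyTransitive (stabilizer (Perm ℕ) (0 : ℕ)) ↥GroupTables where
  exists_smul_inter := by
    rintro U V hU ⟨G, hG⟩ hV ⟨G', hG'⟩
    obtain ⟨I, hI⟩ := exists_finset_forall_eq_mem_of_isOpen hU hG
    obtain ⟨I', hI'⟩ := exists_finset_forall_eq_mem_of_isOpen hV hG'
    obtain ⟨e, he, hK⟩ := exists_ofEquiv_eqOn G
      (φ := MonoidHom.inl (Carrier G) (Carrier G')) (fun a b h => congrArg Prod.fst h) I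
    obtain ⟨e', he', hK'⟩ := exists_ofEquiv_eqOn G'
      (φ := MonoidHom.inr (Carrier G) (Carrier G')) (fun a b h => congrArg Prod.snd h) I'
    let σ : stabilizer (Perm ℕ) (0 : ℕ) := ⟨e.trans e'.symm, by
      change e'.symm (e 0) = 0
      rw [he, ← he', e'.symm_apply_apply]⟩
    have hσ : σ • ofEquiv e he = ofEquiv e' he' := Subtype.ext <| funext fun p => by
      simp [smul_apply, σ, Perm.inv_def]
    exact ⟨σ, _, smul_mem_smul_set (hI _ hK), hσ ▸ hI' _ hK'⟩

def Embeds (H : Type*) [Group H] : Set ↥GroupTables :=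
  {G | ∃ f : H →* Carrier G, Injective f}

variable {H : Type*} [Group H]

theorem mem_embeds_iff {G : ↥GroupTables} : G ∈ Embeds H ↔
    ∃ φ : H → ℕ, (∀ x y, φ (x * y) = G.1 (φ x, φ y)) ∧ Injective φ :=
  ⟨fun ⟨f, hf⟩ => ⟨fun x => fromC G (f x), fun x y => congrArg (fromC G) (map_mul f x y), hf⟩,
    fun ⟨φ, hφ, hinj⟩ => ⟨MonoidHom.mk' (fun x => toC G (φ x)) hφ, hinj⟩⟩

open scoped Pointwise in
theorem smul_embeds_subset (σ : stabilizer (Perm ℕ) (0 : ℕ)) : σ • Embeds H ⊆ Embeds H := by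
  rintro _ ⟨G, ⟨f, hf⟩, rfl⟩
  let e : Carrier G ≃* Carrier (σ • G) := (ofEquivMulEquiv (M := Carrier G) _ _).symm
  exact ⟨e.toMonoidHom.comp f, e.injective.comp hf⟩

theorem analyticSet_embeds [Countable H] : AnalyticSet (Embeds H) := by
  let T : Set (↥GroupTables × (H → ℕ)) :=
    {q | (∀ x y, q.2 (x * y) = q.1.1 (q.2 x, q.2 y)) ∧ Injective q.2}
  have hT : Embeds H = Prod.fst '' T := by
    ext G
    simp [T, mem_embeds_iff]
  have hφ : ∀ x : H, Continuous fun q : ↥GroupTables × (H → ℕ) => q.2 x :=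
    fun x => (continuous_apply x).comp continuous_snd
  have hTc : IsClosed T := by
    simp only [T, Injective, ofPred_and, ofPred_forall]
    refine .inter ?_ ?_ <;> refine isClosed_iInter fun x => isClosed_iInter fun y => ?_
    · exact isClosed_eq (hφ _) <| (continuous_subtype_val.comp continuous_fst)
        |>.apply_of_discreteTopology ((hφ x).prodMk (hφ y))
    · exact (isClosed_discrete {p : ℕ × ℕ | p.1 = p.2 → x = y}).preimage
        ((hφ x).prodMk (hφ y))
  exact hT ▸ hTc.analyticSet.image_of_continuous continuous_fst

end GroupTables

open MeasureTheory in
/-- For every countable group `H`, the embeddability set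
`E_H = {G ∈ 𝒢 : H embeds into Ḡ}` is analytic; consequently it is either meager
or comeager in `𝒢`. -/
theorem embeddability_analytic_and_meager_or_comeager (H : Type*) [Group H] [Countable H] :
    AnalyticSet {G : ↥GroupTables | ∃ f : H →* Carrier G, Function.Injective f} ∧
      (IsMeagre {G : ↥GroupTables | ∃ f : H →* Carrier G, Function.Injective f} ∨
        {G : ↥GroupTables | ∃ f : H →* Carrier G, Function.Injective f} ∈
          residual ↥GroupTables) :=
  ⟨GroupTables.analyticSet_embeds, GroupTables.analyticSet_embeds.baireMeasurableSet
    |>.isMeagre_or_mem_residual_of_smul_subset GroupTables.smul_embeds_subset⟩
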